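/- arXiv:1806.02894 — 3 statements merged into one kernel-verified Lean document; each statement's English description precedes it below -/
import Mathlib

section
/- Let X = I·D where I and D are independent random variables, I ∈ {0,1} with b = Pr[I = 1] ≤ e^{-2}, and 0 ≤ D ≤ κ·E[D] almost surely with κ ≥ 1. Let d̄ = E[D] and μ = E[X] = b·d̄. Then for a² = ln(1/b)/(2κ²d̄²), it holds that E[exp(a²(X - μ)²)] ≤ 2 (i.e., X is sub-Gaussian with variance proxy 6κ²d̄²/ln(1/b)). -/
/-!
Off the event `{I = 1}` the centred variable is `-b d̄`, and on it both `X` and `b d̄` lie in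
`[0, κ d̄]`, so `(X - b d̄)² ≤ (κ d̄)²`. Hence
`E[exp(a² (X - b d̄)²)] ≤ exp(a² b² d̄²) + b exp(a² κ² d̄²) ≤ exp(log(1/b) b² / 2) + √b`,
and for `b ≤ e⁻² < 1/4` the two terms are at most `3/2` and `1/2`.
-/

open MeasureTheory Real ProbabilityTheory

theorem integral_le_of_ae_le_add_indicator {Ω : Type*} [MeasurableSpace Ω] {μ : Measure Ω}
    [IsFiniteMeasure μ] {f : Ω → ℝ} {s : Set Ω} {c c' : ℝ} (hf : 0 ≤ᵐ[μ] f) (hc' : 0 ≤ c')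
    (hfs : ∀ᵐ ω ∂μ, f ω ≤ c + s.indicator (fun _ ↦ c') ω) :
    ∫ ω, f ω ∂μ ≤ μ.real Set.univ * c + μ.real s * c' := by
  set t := toMeasurable μ s
  have ht : MeasurableSet t := measurableSet_toMeasurable μ s
  have hint : Integrable (fun ω ↦ c + t.indicator (fun _ ↦ c') ω) μ :=
    (integrable_const c).add ((integrable_const c').indicator ht)
  calc ∫ ω, f ω ∂μ ≤ ∫ ω, (c + t.indicator (fun _ ↦ c') ω) ∂μ := by
        refine integral_mono_of_nonneg hf hint ?_
        filter_upwards [hfs] with ω hω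
        exact hω.trans (add_le_add le_rfl
          (Set.indicator_le_indicator_of_subset (subset_toMeasurable μ s) (fun _ ↦ hc') ω))
    _ = μ.real Set.univ * c + μ.real s * c' := by
        rw [integral_add (integrable_const c) ((integrable_const c').indicator ht), integral_const,
          integral_indicator_const c' ht]
        simp [t, measureReal_def, measure_toMeasurable]

theorem sq_sub_le_sq_of_mem_Icc {α : Type*} [Ring α] [LinearOrder α] [IsStrictOrderedRing α]
    {x m M : α} (hx : x ∈ Set.Icc 0 M) (hm : m ∈ Set.Icc 0 M) :
    (x - m) ^ 2 ≤ M ^ 2 := by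
  have h := abs_le.mp (abs_sub_le_of_nonneg_of_le hx.1 hx.2 hm.1 hm.2)
  exact sq_le_sq' h.1 h.2

theorem exp_log_inv_mul_sq_div_two_le {b : ℝ} (hb : 0 < b) (hb4 : b ≤ 1 / 4) :
    exp (log (1 / b) * b ^ 2 / 2) ≤ 3 / 2 := by
  have hx0 : 0 ≤ log (1 / b) * b ^ 2 / 2 := by
    have : 0 ≤ log (1 / b) := log_nonneg (by rw [le_div_iff₀ hb]; linarith)
    positivity
  have hx : log (1 / b) * b ^ 2 / 2 ≤ 1 / 8 := calc
    _ ≤ 1 / b * b ^ 2 / 2 := by gcongr; exact log_le_self (by positivity)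
    _ = b / 2 := by field_simp
    _ ≤ 1 / 8 := by linarith
  calc exp (log (1 / b) * b ^ 2 / 2) ≤ 1 / (1 - log (1 / b) * b ^ 2 / 2) :=
        exp_bound_div_one_sub_of_interval hx0 (by linarith)
    _ ≤ 3 / 2 := by rw [div_le_iff₀ (by linarith)]; linarith

theorem mul_exp_log_inv_div_two_le {b : ℝ} (hb : 0 < b) (hb4 : b ≤ 1 / 4) :
    b * exp (log (1 / b) / 2) ≤ 1 / 2 := by
  have hsq : (b * exp (log (1 / b) / 2)) ^ 2 = b := by
    rw [mul_pow, ← exp_nat_mul, Nat.cast_ofNat, mul_div_cancel₀ _ two_ne_zero,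
      exp_log (by positivity)]
    field_simp
  rw [← pow_le_pow_iff_left₀ (by positivity) (by norm_num) two_ne_zero, hsq]
  linarith

theorem subgaussian_indicator_product_general {Ω : Type*} [MeasurableSpace Ω] (μ : Measure Ω)
    [IsProbabilityMeasure μ] (I D : Ω → ℝ) (κ b dbar : ℝ)
    (hκ : 1 ≤ κ) (hdbar : 0 < dbar)
    (hI01 : ∀ᵐ ω ∂μ, I ω = 0 ∨ I ω = 1)
    (hb : b = (μ {ω | I ω = 1}).toReal)
    (hb_pos : 0 < b) (hb_le : b ≤ Real.exp (-2))
    (hD : ∀ᵐ ω ∂μ, 0 ≤ D ω ∧ D ω ≤ κ * dbar) :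
    ∫ ω, Real.exp ((Real.log (1 / b) / (2 * κ ^ 2 * dbar ^ 2)) *
        (I ω * D ω - b * dbar) ^ 2) ∂μ ≤ 2 := by
  set L := log (1 / b)
  set a := L / (2 * κ ^ 2 * dbar ^ 2)
  have hb4 : b ≤ 1 / 4 := by
    have : exp (-2) = exp (-1) * exp (-1) := by rw [← exp_add]; norm_num
    nlinarith [exp_neg_one_lt_half, exp_pos (-1)]
  have hL : 0 ≤ L := log_nonneg (by rw [le_div_iff₀ hb_pos]; linarith)
  have ha : 0 ≤ a := by positivity
  have hbound : ∀ᵐ ω ∂μ, exp (a * (I ω * D ω - b * dbar) ^ 2) ≤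
      exp (a * (b * dbar) ^ 2) + {ω | I ω = 1}.indicator (fun _ ↦ exp (a * (κ * dbar) ^ 2)) ω := by
    filter_upwards [hI01, hD] with ω hI hDω
    rcases hI with hI0 | hI1
    · simp [hI0, Set.indicator_of_notMem]
    · rw [Set.indicator_of_mem (show ω ∈ {ω | I ω = 1} from hI1), hI1, one_mul]
      have hbd : b * dbar ∈ Set.Icc 0 (κ * dbar) :=
        ⟨by positivity, mul_le_mul_of_nonneg_right (by linarith) hdbar.le⟩
      exact le_add_of_nonneg_of_le (exp_pos _).le
        (exp_le_exp.2 (mul_le_mul_of_nonneg_left (sq_sub_le_sq_of_mem_Icc hDω hbd) ha))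
  have hA : a * (b * dbar) ^ 2 ≤ L * b ^ 2 / 2 := by
    rw [show a * (b * dbar) ^ 2 = L * b ^ 2 / 2 / κ ^ 2 by simp only [a]; field_simp]
    exact div_le_self (by positivity) (one_le_pow₀ hκ)
  have hB : a * (κ * dbar) ^ 2 = L / 2 := by simp only [a]; field_simp
  calc _ ≤ μ.real Set.univ * exp (a * (b * dbar) ^ 2) +
        μ.real {ω | I ω = 1} * exp (a * (κ * dbar) ^ 2) :=
        integral_le_of_ae_le_add_indicator (ae_of_all _ fun _ ↦ (exp_pos _).le) (exp_pos _).le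
          hbound
    _ ≤ exp (L * b ^ 2 / 2) + b * exp (L / 2) := by
        rw [probReal_univ, one_mul, measureReal_def, ← hb, hB]
        gcongr
    _ ≤ 3 / 2 + 1 / 2 :=
        add_le_add (exp_log_inv_mul_sq_div_two_le hb_pos hb4) (mul_exp_log_inv_div_two_le hb_pos hb4)
    _ = 2 := by norm_num

theorem subgaussian_indicator_product {Ω : Type*} [MeasurableSpace Ω] (μ : Measure Ω)
    [IsProbabilityMeasure μ] (I D : Ω → ℝ) (κ b dbar : ℝ)
    (hκ : 1 ≤ κ) (hdbar : 0 < dbar)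
    (hindep : ProbabilityTheory.IndepFun I D μ)
    (hI01 : ∀ᵐ ω ∂μ, I ω = 0 ∨ I ω = 1)
    (hb : b = (μ {ω | I ω = 1}).toReal)
    (hb_pos : 0 < b) (hb_le : b ≤ Real.exp (-2))
    (hD : ∀ᵐ ω ∂μ, 0 ≤ D ω ∧ D ω ≤ κ * dbar)
    (hDint : Integrable D μ)
    (hDmean : ∫ ω, D ω ∂μ = dbar) :
    ∫ ω, Real.exp ((Real.log (1 / b) / (2 * κ ^ 2 * dbar ^ 2)) *
        (I ω * D ω - b * dbar) ^ 2) ∂μ ≤ 2 :=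
  subgaussian_indicator_product_general μ I D κ b dbar hκ hdbar hI01 hb hb_pos hb_le hD
end

section
/- Suppose X₁, ..., X_n are negatively associated random variables. Then for every real number λ, E[exp(λ·Σ_{i=1}^n X_i)] ≤ Π_{i=1}^n E[exp(λX_i)]. -/
/- For nonnegative monotone `φᵢ`, the product `∏_{i ∈ s} φᵢ(xᵢ)` is monotone and depends only on
the coordinates in `s`, so negative association peels off one factor at a time:
`E[∏_{s ∪ {j}} φᵢ(Xᵢ)] ≤ E[∏_s φᵢ(Xᵢ)] · E[φⱼ(Xⱼ)]`. Antitone `φᵢ` reduce to this case through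
the negated family `-X`, which is again negatively associated. Since
`exp(λ ∑ Xᵢ) = ∏ exp(λ Xᵢ)` and `t ↦ exp(λ t)` is monotone or antitone according to the sign
of `λ`, the bound on the moment generating function follows. -/

open MeasureTheory Real Finset

/-- Random variables `X 0, ..., X (n-1)` are negatively associated under `μ` if for every
pair of disjoint index sets `A₁, A₂` and every pair of coordinatewise non-decreasing
functions `f, g` depending only on the coordinates in `A₁` resp. `A₂`, the covariance of
`f ∘ X` and `g ∘ X` is non-positive. -/
def NegAssoc {Ω : Type*} [MeasurableSpace Ω] (μ : Measure Ω) {n : ℕ}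
    (X : Fin n → Ω → ℝ) : Prop :=
  ∀ A₁ A₂ : Finset (Fin n), Disjoint A₁ A₂ →
    ∀ f g : (Fin n → ℝ) → ℝ, Monotone f → Monotone g →
      (∀ x y : Fin n → ℝ, (∀ i ∈ A₁, x i = y i) → f x = f y) →
      (∀ x y : Fin n → ℝ, (∀ i ∈ A₂, x i = y i) → g x = g y) →
      ∫ ω, f (fun i => X i ω) * g (fun i => X i ω) ∂μ ≤
        (∫ ω, f (fun i => X i ω) ∂μ) * ∫ ω, g (fun i => X i ω) ∂μ

namespace NegAssoc

variable {Ω : Type*} [MeasurableSpace Ω] {μ : Measure Ω} {n : ℕ} {X : Fin n → Ω → ℝ}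

theorem neg (hNA : NegAssoc μ X) : NegAssoc μ (fun i ω => -X i ω) := by
  intro A₁ A₂ hA f g hf hg hfA hgA
  have key := hNA A₁ A₂ hA (fun x => -f (-x)) (fun x => -g (-x))
    (fun x y hxy => neg_le_neg (hf (neg_le_neg hxy)))
    (fun x y hxy => neg_le_neg (hg (neg_le_neg hxy)))
    (fun x y hxy => by rw [hfA (-x) (-y) fun i hi => by simp [hxy i hi]])
    (fun x y hxy => by rw [hgA (-x) (-y) fun i hi => by simp [hxy i hi]])
  simpa only [neg_mul_neg, integral_neg, Pi.neg_def] using key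

variable [IsProbabilityMeasure μ]

theorem integral_prod_le_prod_integral_of_monotone (hNA : NegAssoc μ X)
    {φ : Fin n → ℝ → ℝ} (hφ : ∀ i, Monotone (φ i)) (hφ_nonneg : ∀ i t, 0 ≤ φ i t)
    (s : Finset (Fin n)) :
    ∫ ω, ∏ i ∈ s, φ i (X i ω) ∂μ ≤ ∏ i ∈ s, ∫ ω, φ i (X i ω) ∂μ := by
  induction s using Finset.induction_on with
  | empty => simp
  | @insert j s hj ih =>
    have hsplit := hNA s {j} (disjoint_singleton_right.2 hj)
      (fun x => ∏ i ∈ s, φ i (x i)) (fun x => φ j (x j))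
      (fun x y hxy => prod_le_prod (fun i _ => hφ_nonneg i _) fun i _ => hφ i (hxy i))
      (fun x y hxy => hφ j (hxy j))
      (fun x y hxy => prod_congr rfl fun i hi => by rw [hxy i hi])
      (fun x y hxy => by rw [hxy j (mem_singleton_self j)])
    have hφj_nonneg : 0 ≤ ∫ ω, φ j (X j ω) ∂μ := integral_nonneg fun ω => hφ_nonneg j _
    simp only [prod_insert hj, mul_comm (φ j _), mul_comm (∫ ω, φ j (X j ω) ∂μ)]
    exact hsplit.trans (mul_le_mul_of_nonneg_right ih hφj_nonneg)

theorem integral_prod_le_prod_integral_of_antitone (hNA : NegAssoc μ X)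
    {φ : Fin n → ℝ → ℝ} (hφ : ∀ i, Antitone (φ i)) (hφ_nonneg : ∀ i t, 0 ≤ φ i t)
    (s : Finset (Fin n)) :
    ∫ ω, ∏ i ∈ s, φ i (X i ω) ∂μ ≤ ∏ i ∈ s, ∫ ω, φ i (X i ω) ∂μ := by
  simpa only [neg_neg] using hNA.neg.integral_prod_le_prod_integral_of_monotone
    (φ := fun i t => φ i (-t)) (fun i _ _ hst => hφ i (neg_le_neg hst))
    (fun i t => hφ_nonneg i _) s

end NegAssoc

theorem mgf_sum_le_prod_of_negAssoc {Ω : Type*} [MeasurableSpace Ω] (μ : Measure Ω)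
    [IsProbabilityMeasure μ] {n : ℕ} (X : Fin n → Ω → ℝ)
    (hNA : NegAssoc μ X) (lam : ℝ) :
    ∫ ω, Real.exp (lam * ∑ i, X i ω) ∂μ ≤ ∏ i, ∫ ω, Real.exp (lam * X i ω) ∂μ := by
  simp only [mul_sum, exp_sum]
  have hexp_nonneg : ∀ (_ : Fin n) t, 0 ≤ Real.exp (lam * t) := fun _ t => (exp_pos _).le
  rcases le_total 0 lam with hlam | hlam
  · exact hNA.integral_prod_le_prod_integral_of_monotone
      (fun _ _ _ hst => exp_le_exp.2 (mul_le_mul_of_nonneg_left hst hlam)) hexp_nonneg univ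
  · exact hNA.integral_prod_le_prod_integral_of_antitone
      (fun _ _ _ hst => exp_le_exp.2 (mul_le_mul_of_nonpos_left hst hlam)) hexp_nonneg univ
end

section
/- In the two-level supply instance with n even supply nodes (half with supply (2−α)/n, half with supply α/n), if a random bipartite graph is formed by connecting each small supply node u (with s(u) = α/n) to each of the n demand nodes independently with probability γα/n where γ < 1/(4α), then with probability at least 1/2 the number of edges incident to the small supply nodes is less than n/4, and hence at least n/4 small supply nodes are isolated, so the total unfulfilled supply from isolated small nodes exceeds (n/4)·(α/n) = α/4. -/
open MeasureTheory Finset ProbabilityTheory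
open scoped Classical ENNReal

/-!
By linearity of expectation the number of edges at the small supply nodes has mean
`(n / 2) · n · γα / n = γα n / 2 < n / 8`, so by Markov's inequality it is below `n / 4` with
probability at least `1 / 2`. Every edge makes at most one of the `n / 2` small nodes non-isolated,
so on that event at least `n / 4` of them are isolated, carrying total supply at least `α / 4`.
-/

section CountingSuccesses

variable {ι Ω : Type*} [Fintype ι] [MeasurableSpace Ω] {μ : Measure Ω}
  {X : ι → Ω → Bool}

theorem measurable_card_filter (hX : ∀ i, Measurable (X i)) :
    Measurable fun ω => (#{i | X i ω = true} : ℝ≥0∞) :=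
  (measurable_of_countable fun x : ι → Bool => (#{i | x i = true} : ℝ≥0∞)).comp
    (measurable_pi_lambda _ hX)

theorem lintegral_card_filter_eq_sum (hX : ∀ i, Measurable (X i)) :
    ∫⁻ ω, (#{i | X i ω = true} : ℝ≥0∞) ∂μ = ∑ i, μ {ω | X i ω = true} := by
  have hcard ω :
      (#{i | X i ω = true} : ℝ≥0∞) = ∑ i, {ω | X i ω = true}.indicator 1 ω := by
    simp [Set.indicator_apply]
  have hset i : MeasurableSet {ω | X i ω = true} := hX i (measurableSet_singleton true)
  simp_rw [hcard]
  rw [lintegral_finsetSum _ fun i _ => measurable_one.indicator (hset i)]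
  simp_rw [lintegral_indicator_one (hset _)]

theorem measure_card_filter_ge_le (hX : ∀ i, Measurable (X i)) {t : ℝ≥0∞} (ht0 : t ≠ 0)
    (ht : t ≠ ∞) :
    μ {ω | t ≤ #{i | X i ω = true}} ≤ (∑ i, μ {ω | X i ω = true}) / t := by
  rw [← lintegral_card_filter_eq_sum hX]
  refine meas_ge_le_lintegral_div ?_ ht0 ht
  exact (measurable_card_filter hX).aemeasurable

theorem one_sub_div_le_measure_card_filter_lt [IsProbabilityMeasure μ]
    (hX : ∀ i, Measurable (X i)) {t : ℝ} (ht : 0 < t) :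
    1 - (∑ i, μ {ω | X i ω = true}) / ENNReal.ofReal t ≤
      μ {ω | (#{i | X i ω = true} : ℝ) < t} := by
  have hcompl : {ω | (#{i | X i ω = true} : ℝ) < t} =
      {ω | ENNReal.ofReal t ≤ #{i | X i ω = true}}ᶜ := by
    ext ω
    simp [← ENNReal.ofReal_natCast, ENNReal.ofReal_le_ofReal_iff (Nat.cast_nonneg _)]
  have hmeas : MeasurableSet {ω | ENNReal.ofReal t ≤ #{i | X i ω = true}} :=
    measurableSet_le measurable_const (measurable_card_filter hX)
  rw [hcompl, prob_compl_eq_one_sub hmeas]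
  exact tsub_le_tsub_left
    (measure_card_filter_ge_le hX (ENNReal.ofReal_pos.mpr ht).ne' ENNReal.ofReal_ne_top) 1

end CountingSuccesses

theorem card_le_card_filter_forall_not_add_card_filter {α β : Type*} [Fintype α] [Fintype β]
    (P : α × β → Prop) [DecidablePred P] :
    Fintype.card α ≤ #{a | ∀ b, ¬ P (a, b)} + #{p | P p} := by
  have hfst :
      ({a | ¬ ∀ b, ¬ P (a, b)} : Finset α) = ({p | P p} : Finset (α × β)).image Prod.fst := by
    ext a; simp
  calc Fintype.card α = #{a | ∀ b, ¬ P (a, b)} + #{a | ¬ ∀ b, ¬ P (a, b)} :=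
        (Finset.card_filter_add_card_filter_not _).symm
    _ ≤ _ := by rw [hfst]; gcongr; exact Finset.card_image_le

theorem wpc_small_nodes_isolated_general (n : ℕ) (hn : Even n) (hn0 : 0 < n)
    {Ω : Type*} [MeasurableSpace Ω] (μ : Measure Ω) [IsProbabilityMeasure μ]
    (α γ : ℝ) (hα : 0 < α) (hγ : γ < 1 / (4 * α))
    (X : Fin (n / 2) × Fin n → Ω → Bool)
    (hmeas : ∀ p, Measurable (X p))
    (hprob : ∀ p, μ {ω | X p ω = true} = ENNReal.ofReal (γ * α / n)) :
    (1 / 2 : ℝ≥0∞) ≤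
      μ {ω |
        (((Finset.univ.filter (fun p : Fin (n / 2) × Fin n => X p ω = true)).card : ℝ)
            < (n : ℝ) / 4) ∧
        ((n : ℝ) / 4 ≤
          ((Finset.univ.filter (fun u : Fin (n / 2) =>
              ∀ v : Fin n, X (u, v) ω = false)).card : ℝ)) ∧
        (α / 4 ≤
          ((Finset.univ.filter (fun u : Fin (n / 2) =>
              ∀ v : Fin n, X (u, v) ω = false)).card : ℝ) * (α / n)) } := by
  have hnR : (0 : ℝ) < n := Nat.cast_pos.mpr hn0
  have hhalf : ((n / 2 : ℕ) : ℝ) = n / 2 := by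
    obtain ⟨k, rfl⟩ := hn
    rw [← two_mul, Nat.mul_div_cancel_left _ two_pos]
    push_cast
    ring
  have hγα : γ * α < 1 / 4 := by
    rw [lt_div_iff₀ (by positivity)] at hγ
    linarith
  have hexpected : (∑ p, μ {ω | X p ω = true}) / ENNReal.ofReal (n / 4) ≤ 1 / 2 := by
    have hval : ((n / 2 : ℕ) : ℝ) * n * (γ * α / n) / (n / 4) = 2 * (γ * α) := by
      rw [hhalf]
      field_simp
      ring
    simp only [hprob, Finset.sum_const, Finset.card_univ, Fintype.card_prod, Fintype.card_fin,
      nsmul_eq_mul]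
    rw [← ENNReal.ofReal_natCast, ← ENNReal.ofReal_mul (by positivity),
      ← ENNReal.ofReal_div_of_pos (by positivity), Nat.cast_mul, hval,
      ← ENNReal.ofReal_one, ← ENNReal.ofReal_ofNat 2, ← ENNReal.ofReal_div_of_pos two_pos]
    exact ENNReal.ofReal_le_ofReal (by linarith)
  calc (1 / 2 : ℝ≥0∞) = 1 - 1 / 2 := by rw [one_div, ENNReal.one_sub_inv_two]
    _ ≤ 1 - (∑ p, μ {ω | X p ω = true}) / ENNReal.ofReal (n / 4) :=
        tsub_le_tsub_left hexpected 1
    _ ≤ _ := one_sub_div_le_measure_card_filter_lt hmeas (by positivity)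
    _ ≤ _ := by
      refine measure_mono fun ω (hedges : (#{p | X p ω = true} : ℝ) < n / 4) => ⟨hedges, ?_⟩
      have hcard :
          ((n / 2 : ℕ) : ℝ) ≤ #{u | ∀ v, X (u, v) ω = false} + #{p | X p ω = true} := by
        exact_mod_cast by
          simpa using card_le_card_filter_forall_not_add_card_filter fun p => X p ω = true
      have hisolated : (n : ℝ) / 4 ≤ #{u | ∀ v, X (u, v) ω = false} := by linarith
      refine ⟨hisolated, ?_⟩
      calc α / 4 = (n / 4) * (α / n) := by field_simp
        _ ≤ _ := by gcongr

theorem wpc_small_nodes_isolated (n : ℕ) (hn : Even n) (hn0 : 0 < n)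
    {Ω : Type*} [MeasurableSpace Ω] (μ : Measure Ω) [IsProbabilityMeasure μ]
    (α γ : ℝ) (hα : 0 < α) (hγ0 : 0 ≤ γ) (hγ : γ < 1 / (4 * α))
    (X : Fin (n / 2) × Fin n → Ω → Bool)
    (hmeas : ∀ p, Measurable (X p))
    (hindep : ProbabilityTheory.iIndepFun (m := fun _ => (inferInstance : MeasurableSpace Bool)) X μ)
    (hprob : ∀ p, μ {ω | X p ω = true} = ENNReal.ofReal (γ * α / n)) :
    (1 / 2 : ℝ≥0∞) ≤
      μ {ω |
        (((Finset.univ.filter (fun p : Fin (n / 2) × Fin n => X p ω = true)).card : ℝ)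
            < (n : ℝ) / 4) ∧
        ((n : ℝ) / 4 ≤
          ((Finset.univ.filter (fun u : Fin (n / 2) =>
              ∀ v : Fin n, X (u, v) ω = false)).card : ℝ)) ∧
        (α / 4 ≤
          ((Finset.univ.filter (fun u : Fin (n / 2) =>
              ∀ v : Fin n, X (u, v) ω = false)).card : ℝ) * (α / n)) } :=
  wpc_small_nodes_isolated_general n hn hn0 μ α γ hα hγ X hmeas hprob
end
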